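/- arXiv:2110.06656 — 2 statements merged into one kernel-verified Lean document; each statement's English description precedes it below -/
import Mathlib

section
/- Let k, G, V_1, …, V_k and H be as in the context. Every dominating set S of H with M(v,S) ≤ k for every vertex v of H satisfies S ∩ U_i = ∅ for every i ∈ {1, …, k}. -/
namespace MISRed

/-- Index type for the edge vertices `x_{uv}`: ordered pairs `(u,v)` of adjacent
vertices of `G` whose colors satisfy `c u < c v`. -/
abbrev EdgeX {V : Type} {k : ℕ} (G : SimpleGraph V) (c : V → Fin k) : Type :=
  {p : V × V // G.Adj p.1 p.2 ∧ c p.1 < c p.2}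

/-- Vertex set of the split graph `H`: the original vertices of `G`, the new
vertex `w`, the sets `U_i` (each of size `k+1`), and the edge vertices. -/
abbrev VHmis (V : Type) (k : ℕ) (G : SimpleGraph V) (c : V → Fin k) : Type :=
  V ⊕ (Unit ⊕ ((Fin k × Fin (k + 1)) ⊕ EdgeX G c))

variable {V : Type} {k : ℕ}

/-- The vertex of `H` corresponding to a vertex `u` of `G`. -/
def orig (G : SimpleGraph V) (c : V → Fin k) (u : V) : VHmis V k G c := Sum.inl u

/-- The special clique vertex `w`. -/
def wV (G : SimpleGraph V) (c : V → Fin k) : VHmis V k G c := Sum.inr (Sum.inl ())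

/-- The `j`-th vertex of `U_i`. -/
def uV (G : SimpleGraph V) (c : V → Fin k) (i : Fin k) (j : Fin (k + 1)) :
    VHmis V k G c := Sum.inr (Sum.inr (Sum.inl (i, j)))

/-- The edge vertex `x_{uv}` for the edge `e`. -/
def xV (G : SimpleGraph V) (c : V → Fin k) (e : EdgeX G c) : VHmis V k G c :=
  Sum.inr (Sum.inr (Sum.inr e))

/-- The adjacency-generating relation of `H`: `V(G) ∪ {w}` is a clique, each
vertex of `U_i` is adjacent to every vertex of color `i`, `w` is adjacent to
all edge vertices, and `x_{uv}` (where `u ∈ V_p`, `v ∈ V_q`) is adjacent to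
every vertex of `(V_p \ {u}) ∪ (V_q \ {v})`. -/
def rMIS (V : Type) (k : ℕ) (G : SimpleGraph V) (c : V → Fin k) :
    VHmis V k G c → VHmis V k G c → Prop := fun a b =>
  (∃ u v : V, a = orig G c u ∧ b = orig G c v) ∨
  (∃ u : V, a = orig G c u ∧ b = wV G c) ∨
  (∃ (u : V) (i : Fin k) (j : Fin (k + 1)), a = orig G c u ∧ b = uV G c i j ∧ c u = i) ∨
  (∃ (u : V) (e : EdgeX G c), a = orig G c u ∧ b = xV G c e ∧
    ((c u = c e.1.1 ∧ u ≠ e.1.1) ∨ (c u = c e.1.2 ∧ u ≠ e.1.2))) ∨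
  (∃ e : EdgeX G c, a = wV G c ∧ b = xV G c e)

/-- The split graph `H` of the reduction. -/
def Hmis (V : Type) (k : ℕ) (G : SimpleGraph V) (c : V → Fin k) :
    SimpleGraph (VHmis V k G c) := SimpleGraph.fromRel (rMIS V k G c)

/-- `S` is a dominating set of `H`. -/
def IsDom {W : Type*} (H : SimpleGraph W) (S : Set W) : Prop :=
  ∀ v, v ∈ S ∨ ∃ u ∈ S, H.Adj v u

/-- Every vertex has membership `M(v,S) = |N[v] ∩ S|` at most `b`. -/
def MembLE {W : Type*} (H : SimpleGraph W) (S : Set W) (b : ℕ) : Prop :=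
  ∀ v, ((insert v (H.neighborSet v)) ∩ S).ncard ≤ b

-- aux lemmas
lemma adj_orig_orig (G : SimpleGraph V) (c : V → Fin k) {u v : V} (h : u ≠ v) :
    (Hmis V k G c).Adj (orig G c u) (orig G c v) := by
  rw [Hmis, SimpleGraph.fromRel_adj]
  exact ⟨by simp [orig, h], Or.inl (Or.inl ⟨u, v, rfl, rfl⟩)⟩

lemma adj_orig_uV (G : SimpleGraph V) (c : V → Fin k) {v : V} {i : Fin k}
    (j : Fin (k+1)) (h : c v = i) :
    (Hmis V k G c).Adj (orig G c v) (uV G c i j) := by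
  rw [Hmis, SimpleGraph.fromRel_adj]
  exact ⟨by simp [orig, uV], Or.inl (Or.inr (Or.inr (Or.inl ⟨v, i, j, rfl, rfl, h⟩)))⟩

lemma uV_adj (G : SimpleGraph V) (c : V → Fin k) {i : Fin k} {j : Fin (k+1)}
    {b : VHmis V k G c} (h : (Hmis V k G c).Adj (uV G c i j) b) :
    ∃ v : V, b = orig G c v ∧ c v = i := by
  rw [Hmis, SimpleGraph.fromRel_adj] at h
  obtain ⟨hne, h | h⟩ := h <;>
    rcases h with ⟨u,v,h1,h2⟩ | ⟨u,h1,h2⟩ | ⟨u,i',j',h1,h2,h3⟩ | ⟨u,e,h1,h2,h3⟩ | ⟨e,h1,h2⟩ <;>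
    simp_all [orig, wV, uV, xV]

end MISRed

open MISRed in
/-- Every dominating set `S` of `H` with `M(v,S) ≤ k` for every vertex `v`
satisfies `S ∩ U_i = ∅` for every `i`. -/
theorem stmt_7 {V : Type} [Fintype V] (k : ℕ) (hk : 1 ≤ k)
    (G : SimpleGraph V) (c : V → Fin k) (hc : Function.Surjective c)
    (S : Set (VHmis V k G c))
    (hS : IsDom (Hmis V k G c) S) (hM : MembLE (Hmis V k G c) S k) :
    ∀ (i : Fin k) (j : Fin (k + 1)), uV G c i j ∉ S := by
  classical
  have key : ∀ p : Fin k, ∃ v : V, c v = p ∧ orig G c v ∈ S := by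
    intro p
    by_contra hcon
    push_neg at hcon
    have hall : ∀ j : Fin (k+1), uV G c p j ∈ S := by
      intro j
      rcases hS (uV G c p j) with h | ⟨u, huS, hadj⟩
      · exact h
      · obtain ⟨v, rfl, hcv⟩ := uV_adj G c hadj
        exact absurd huS (hcon v hcv)
    obtain ⟨v0, hv0⟩ := hc p
    have hMv := hM (orig G c v0)
    set A := (insert (orig G c v0) ((Hmis V k G c).neighborSet (orig G c v0))) ∩ S with hA
    have hsub : (↑(Finset.univ.image (fun j => uV G c p j)) : Set (VHmis V k G c)) ⊆ A := by
      intro x hx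
      simp only [Finset.coe_image, Finset.coe_univ, Set.image_univ, Set.mem_range] at hx
      obtain ⟨j', rfl⟩ := hx
      exact ⟨Set.mem_insert_of_mem _ (adj_orig_uV G c j' hv0), hall j'⟩
    have hcard : (Finset.univ.image (fun j => uV G c p j)).card = k + 1 := by
      rw [Finset.card_image_of_injective _
        (fun a b hab => by simpa [uV, Prod.ext_iff] using hab)]
      simp
    have hle := Set.ncard_le_ncard hsub (Set.toFinite A)
    rw [Set.ncard_coe_finset, hcard] at hle
    omega
  choose f hf1 hf2 using key
  intro i j hij
  have hMv := hM (orig G c (f i))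
  set A := (insert (orig G c (f i)) ((Hmis V k G c).neighborSet (orig G c (f i)))) ∩ S with hA
  set T : Finset (VHmis V k G c) :=
    insert (uV G c i j) (Finset.univ.image (fun p => orig G c (f p))) with hT
  have hinj : Function.Injective (fun p => orig G c (f p)) := by
    intro a b hab
    have h2 : f a = f b := Sum.inl.inj hab
    rw [← hf1 a, ← hf1 b, h2]
  have hcard : T.card = k + 1 := by
    rw [hT, Finset.card_insert_of_notMem (by simp [orig, uV]),
      Finset.card_image_of_injective _ hinj, Finset.card_univ, Fintype.card_fin]
  have hsub : (↑T : Set (VHmis V k G c)) ⊆ A := by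
    intro x hx
    simp only [hT, Finset.coe_insert, Set.mem_insert_iff, Finset.coe_image,
      Finset.coe_univ, Set.image_univ, Set.mem_range] at hx
    rcases hx with rfl | ⟨p, rfl⟩
    · exact ⟨Set.mem_insert_of_mem _ (adj_orig_uV G c j (hf1 i)), hij⟩
    · by_cases hp : f p = f i
      · exact ⟨by rw [hp]; exact Set.mem_insert _ _, hf2 p⟩
      · exact ⟨Set.mem_insert_of_mem _ ((adj_orig_orig G c hp).symm), hf2 p⟩
  have hle := Set.ncard_le_ncard hsub (Set.toFinite A)
  rw [Set.ncard_coe_finset, hcard] at hle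
  omega
end

section
/- Let k, n, G and H be as in the context. If H has a dominating set S with M(v,S) ≤ n+1 for every vertex v of H, then there exist indices x_1, …, x_k ∈ [n] such that the vertices u_{1,x_1}, …, u_{k,x_k} are pairwise adjacent in G (a multicolored clique). -/
namespace MCCRed

/-- Vertex set of a type-I gadget of order `n`: the heads `h₁, h₂`, the sets
`A = {a_1,…,a_n}` and `D = {d_1,…,d_n}`, and, for each `t ∈ [n]` and each of
the three D-gadgets `D_{a_t,d_t}`, `D_{a_t,h₁}`, `D_{d_t,h₂}` (indexed by
`Fin 3` in this order), its `n+2` private common neighbors. -/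
abbrev IVert (n : ℕ) : Type :=
  (Unit ⊕ Unit) ⊕ ((Fin n ⊕ Fin n) ⊕ (Fin n × Fin 3 × Fin (n + 2)))

/-- The head `h₁`. -/
def h1V (n : ℕ) : IVert n := Sum.inl (Sum.inl ())
/-- The head `h₂`. -/
def h2V (n : ℕ) : IVert n := Sum.inl (Sum.inr ())
/-- The vertex `a_t`. -/
def aIV (n : ℕ) (t : Fin n) : IVert n := Sum.inr (Sum.inl (Sum.inl t))
/-- The vertex `d_t`. -/
def dIV (n : ℕ) (t : Fin n) : IVert n := Sum.inr (Sum.inl (Sum.inr t))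
/-- The `s`-th private vertex of the `w`-th D-gadget at position `t`
(`w = 0`: `D_{a_t,d_t}`, `w = 1`: `D_{a_t,h₁}`, `w = 2`: `D_{d_t,h₂}`). -/
def padV (n : ℕ) (t : Fin n) (w : Fin 3) (s : Fin (n + 2)) : IVert n :=
  Sum.inr (Sum.inr (t, w, s))

/-- Adjacency-generating relation of the type-I gadget:  `h₁h₂`, `h₂` to every
`a_t`, `h₁` to every `d_t`, the heads of each D-gadget are adjacent
(`a_t d_t`, `a_t h₁`, `d_t h₂`), and each of the `n+2` private vertices of a
D-gadget is adjacent exactly to its two heads. -/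
def rI (n : ℕ) : IVert n → IVert n → Prop := fun x y =>
  (x = h1V n ∧ y = h2V n) ∨
  (∃ t, x = h2V n ∧ y = aIV n t) ∨
  (∃ t, x = h1V n ∧ y = dIV n t) ∨
  (∃ t, x = aIV n t ∧ y = dIV n t) ∨
  (∃ t, x = aIV n t ∧ y = h1V n) ∨
  (∃ t, x = dIV n t ∧ y = h2V n) ∨
  (∃ t s, x = padV n t 0 s ∧ (y = aIV n t ∨ y = dIV n t)) ∨
  (∃ t s, x = padV n t 1 s ∧ (y = aIV n t ∨ y = h1V n)) ∨
  (∃ t s, x = padV n t 2 s ∧ (y = dIV n t ∨ y = h2V n))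

/-- The type-I gadget of order `n` as a simple graph. -/
def gadgetI (n : ℕ) : SimpleGraph (IVert n) := SimpleGraph.fromRel (rI n)

/-- Vertex set of a block whose type-I gadgets are indexed by `ι`: the gadget
vertices together with `f`, `f'`, the `c_p` (`p ∈ [n+1]`) and the `b_q`
(`q ∈ [(n+1)(n+2)]`). -/
abbrev BVert (n : ℕ) (ι : Type) : Type :=
  (ι × IVert n) ⊕ ((Unit ⊕ Unit) ⊕ (Fin (n + 1) ⊕ Fin ((n + 1) * (n + 2))))

/-- The copy of gadget vertex `x` inside the gadget indexed by `g`. -/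
def gadV {n : ℕ} {ι : Type} (g : ι) (x : IVert n) : BVert n ι := Sum.inl (g, x)
/-- The block vertex `f`. -/
def fV (n : ℕ) (ι : Type) : BVert n ι := Sum.inr (Sum.inl (Sum.inl ()))
/-- The block vertex `f'`. -/
def f'V (n : ℕ) (ι : Type) : BVert n ι := Sum.inr (Sum.inl (Sum.inr ()))
/-- The block vertex `c_p`; `C'(B) = {c_1,…,c_{n+1}}`. -/
def cV (n : ℕ) (ι : Type) (p : Fin (n + 1)) : BVert n ι := Sum.inr (Sum.inr (Sum.inl p))
/-- The block vertex `b_q`. -/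
def bV (n : ℕ) (ι : Type) (q : Fin ((n + 1) * (n + 2))) : BVert n ι :=
  Sum.inr (Sum.inr (Sum.inr q))

/-- Adjacency-generating relation of a block: the gadget edges inside each
gadget, `f` adjacent to every `a_t` of every gadget, `f f'`, `f'` to each
`c_p`, and `c_p b_q` exactly when `(p-1)(n+2) < q ≤ p(n+2)` (zero-indexed:
`p(n+2) ≤ q < (p+1)(n+2)`). -/
def rB (n : ℕ) (ι : Type) : BVert n ι → BVert n ι → Prop := fun x y =>
  (∃ (g : ι) (a b : IVert n), x = gadV g a ∧ y = gadV g b ∧ rI n a b) ∨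
  (∃ (g : ι) (t : Fin n), x = fV n ι ∧ y = gadV g (aIV n t)) ∨
  (x = fV n ι ∧ y = f'V n ι) ∨
  (∃ p, x = f'V n ι ∧ y = cV n ι p) ∨
  (∃ p q, x = cV n ι p ∧ y = bV n ι q ∧
    p.val * (n + 2) ≤ q.val ∧ q.val < (p.val + 1) * (n + 2))

/-- Ordered pairs of colors `i < j`, indexing the edge-blocks and connectors. -/
abbrev Pairs (k : ℕ) : Type := {p : Fin k × Fin k // p.1 < p.2}

/-- The edges of `G` between color classes `P.1` and `P.2` (the vertex set of
`G` being `Fin k × Fin n`, with `u_{i,ℓ} = (i,ℓ)`): `e = (x,y)` encodes the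
edge `u_{i,x} u_{j,y}`. -/
abbrev EdgeIn {k n : ℕ} (G : SimpleGraph (Fin k × Fin n)) (P : Pairs k) : Type :=
  {e : Fin n × Fin n // G.Adj (P.1.1, e.1) (P.1.2, e.2)}

/-- Vertex set of `H`: the vertex-blocks `H_i` (with one gadget per `ℓ ∈ [n]`),
the edge-blocks `H_{i,j}` (with one gadget per edge in `E_{i,j}`), and for each
pair `i < j` the four connectors, encoded as `(side, kind)` with
`side = false/true` for superscript `i`/`j` and `kind = false/true` for
`r`/`s`. -/
abbrev VHmcc (k n : ℕ) (G : SimpleGraph (Fin k × Fin n)) : Type :=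
  (Fin k × BVert n (Fin n)) ⊕
    ((Σ P : Pairs k, BVert n (EdgeIn G P)) ⊕ (Pairs k × Bool × Bool))

variable {k n : ℕ}

/-- Vertex `x` of the vertex-block `H_i`. -/
def vbV (G : SimpleGraph (Fin k × Fin n)) (i : Fin k) (x : BVert n (Fin n)) :
    VHmcc k n G := Sum.inl (i, x)

/-- Vertex `x` of the edge-block `H_P`. -/
def ebV (G : SimpleGraph (Fin k × Fin n)) (P : Pairs k)
    (x : BVert n (EdgeIn G P)) : VHmcc k n G := Sum.inr (Sum.inl ⟨P, x⟩)

/-- The connector vertex of the pair `P` on side `side` of kind `kind`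
(`kind = false` is `r`, `kind = true` is `s`). -/
def connV (G : SimpleGraph (Fin k × Fin n)) (P : Pairs k) (side kind : Bool) :
    VHmcc k n G := Sum.inr (Sum.inr (P, side, kind))

/-- Adjacency-generating relation of `H`: block edges inside every vertex-block
and every edge-block, plus the connector edges. For a pair `P = (i,j)` with
`i < j`: in gadget `I_ℓ` of `H_i` the vertex `a_t` is adjacent to `s^i_P` iff
`t ≤ ℓ` and to `r^i_P` iff `ℓ ≤ t` (similarly for `H_j`); in gadget `I_e` of
`H_P` with `e = u_{i,x}u_{j,y}`, the vertex `a_t` is adjacent to `r^i_P` iff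
`t ≤ x`, to `s^i_P` iff `x ≤ t`, to `r^j_P` iff `t ≤ y` and to `s^j_P` iff
`y ≤ t`. -/
def rH (k n : ℕ) (G : SimpleGraph (Fin k × Fin n)) :
    VHmcc k n G → VHmcc k n G → Prop := fun x y =>
  (∃ (i : Fin k) (a b : BVert n (Fin n)),
    x = vbV G i a ∧ y = vbV G i b ∧ rB n (Fin n) a b) ∨
  (∃ (P : Pairs k) (a b : BVert n (EdgeIn G P)),
    x = ebV G P a ∧ y = ebV G P b ∧ rB n (EdgeIn G P) a b) ∨
  (∃ (P : Pairs k) (ℓ t : Fin n), x = vbV G P.1.1 (gadV ℓ (aIV n t)) ∧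
    ((t.val ≤ ℓ.val ∧ y = connV G P false true) ∨
     (ℓ.val ≤ t.val ∧ y = connV G P false false))) ∨
  (∃ (P : Pairs k) (ℓ t : Fin n), x = vbV G P.1.2 (gadV ℓ (aIV n t)) ∧
    ((t.val ≤ ℓ.val ∧ y = connV G P true true) ∨
     (ℓ.val ≤ t.val ∧ y = connV G P true false))) ∨
  (∃ (P : Pairs k) (e : EdgeIn G P) (t : Fin n),
    x = ebV G P (gadV e (aIV n t)) ∧
    (((t.val ≤ e.1.1.val ∧ y = connV G P false false) ∨
      (e.1.1.val ≤ t.val ∧ y = connV G P false true)) ∨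
     ((t.val ≤ e.1.2.val ∧ y = connV G P true false) ∨
      (e.1.2.val ≤ t.val ∧ y = connV G P true true))))

/-- The graph `H` output by the reduction from Multi-Colored Clique. -/
def Hmcc (k n : ℕ) (G : SimpleGraph (Fin k × Fin n)) :
    SimpleGraph (VHmcc k n G) := SimpleGraph.fromRel (rH k n G)

/-- `S` is a dominating set. -/
def IsDom {W : Type*} (H : SimpleGraph W) (S : Set W) : Prop :=
  ∀ v, v ∈ S ∨ ∃ u ∈ S, H.Adj v u

/-- Every vertex has membership `M(v,S) = |N[v] ∩ S|` at most `b`. -/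
def MembLE {W : Type*} (H : SimpleGraph W) (S : Set W) (b : ℕ) : Prop :=
  ∀ v, ((insert v (H.neighborSet v)) ∩ S).ncard ≤ b

/-- A path decomposition of `H` with bags `X_1, …, X_m`: every vertex is in
some bag, every edge is inside some bag, and the bags containing a given
vertex are consecutive. -/
def IsPathDecomp {W : Type*} (H : SimpleGraph W) (m : ℕ) (bags : Fin m → Set W) : Prop :=
  (∀ v, ∃ i, v ∈ bags i) ∧
  (∀ u v, H.Adj u v → ∃ i, u ∈ bags i ∧ v ∈ bags i) ∧
  (∀ (v : W) (i j l : Fin m), i ≤ j → j ≤ l → v ∈ bags i → v ∈ bags l → v ∈ bags j)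

end MCCRed

/-!
In each block the `n + 1` vertices `c_p` lie in `S`, since each has `n + 2` neighbours `b_q`
adjacent to nothing else; hence `M(f', S) ≥ n + 1` forces `f, f' ∉ S`, and `f` is dominated by
some `a_t`. The `n + 2` private vertices of a D-gadget `D_{u,v}` force `u ∈ S` or `v ∈ S`. In the
gadget containing that `a_t` this makes `h₁ ∉ S`: otherwise `N[h₁] ∩ S` contains `h₁`, one of
`a_t, d_t` for each `t`, and either `h₂` or (when `h₂ ∉ S`, so that every `d_t ∈ S`) the vertex
`a_t` itself. So each block has a gadget with all of `A` in `S`. At the connector `s^i_{i,j}`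
the selected gadgets `I_ℓ` of `H_i` and `I_e` of `H_{i,j}`, `e = u_{i,x} u_{j,y}`, contribute
`ℓ` and `n + 1 - x` vertices of `S`, so `ℓ ≤ x`; symmetrically `r^i_{i,j}` gives `x ≤ ℓ`.
Hence every selected edge joins the selected vertices.
-/

namespace MCCRed

section Membership

variable {W : Type*} [Finite W] {H : SimpleGraph W} {S : Set W} {b n : ℕ}

theorem MembLE.card_le (hm : MembLE H S b) {v : W} {T : Finset W}
    (hT : ∀ w ∈ T, w ∈ S ∧ (w = v ∨ H.Adj v w)) : T.card ≤ b := by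
  rw [← Set.ncard_coe_finset]
  refine le_trans (Set.ncard_le_ncard ?_) (hm v)
  exact fun w hw => ⟨(hT w hw).2, (hT w hw).1⟩

theorem IsDom.mem_or_mem_of_private (hd : IsDom H S) (hm : MembLE H S b) {u v : W} {m : ℕ}
    {p : Fin m → W} (hp : Function.Injective p) (hbm : b < m) (hadj : ∀ s, H.Adj u (p s))
    (hnbr : ∀ s w, H.Adj (p s) w → w = u ∨ w = v) : u ∈ S ∨ v ∈ S := by
  by_contra! huv
  have hpS (s : Fin m) : p s ∈ S := (hd (p s)).resolve_right fun ⟨w, hwS, hw⟩ => by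
    rcases hnbr s w hw with rfl | rfl
    exacts [huv.1 hwS, huv.2 hwS]
  have := hm.card_le (v := u) (T := Finset.univ.map ⟨p, hp⟩) (by simp [hpS, hadj])
  simp only [Finset.card_map, Finset.card_univ, Fintype.card_fin] at this
  omega

theorem MembLE.le_of_adj_Iic_Ici (hm : MembLE H S (n + 1)) {v : W} {α β : Fin n → W}
    (hα : Function.Injective α) (hβ : Function.Injective β) (hαβ : ∀ s t, α s ≠ β t)
    (hαS : ∀ t, α t ∈ S) (hβS : ∀ t, β t ∈ S) {x y : Fin n}
    (hαv : ∀ t ≤ x, H.Adj v (α t)) (hβv : ∀ t, y ≤ t → H.Adj v (β t)) : x ≤ y := by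
  classical
  have hdisj : Disjoint ((Finset.Iic x).map ⟨α, hα⟩) ((Finset.Ici y).map ⟨β, hβ⟩) := by
    simpa [Finset.disjoint_left] using fun s _ t _ h => hαβ s t h.symm
  have hle := hm.card_le (v := v)
    (T := (Finset.Iic x).map ⟨α, hα⟩ ∪ (Finset.Ici y).map ⟨β, hβ⟩) <| by
    simp only [Finset.mem_union, Finset.mem_map, Finset.mem_Iic, Finset.mem_Ici,
      Function.Embedding.coeFn_mk]
    rintro w (⟨t, ht, rfl⟩ | ⟨t, ht, rfl⟩)
    exacts [⟨hαS t, Or.inr (hαv t ht)⟩, ⟨hβS t, Or.inr (hβv t ht)⟩]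
  rw [Finset.card_union_of_disjoint hdisj, Finset.card_map, Finset.card_map, Fin.card_Iic,
    Fin.card_Ici] at hle
  have := y.isLt
  exact Fin.le_iff_val_le_val.mpr (by omega)

theorem MembLE.eq_of_connectors (hm : MembLE H S (n + 1)) {r s : W} {α β : Fin n → W}
    (hα : Function.Injective α) (hβ : Function.Injective β) (hαβ : ∀ s t, α s ≠ β t)
    (hαS : ∀ t, α t ∈ S) (hβS : ∀ t, β t ∈ S) {x y : Fin n}
    (hsα : ∀ t ≤ x, H.Adj s (α t)) (hsβ : ∀ t, y ≤ t → H.Adj s (β t))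
    (hrβ : ∀ t ≤ y, H.Adj r (β t)) (hrα : ∀ t, x ≤ t → H.Adj r (α t)) : x = y :=
  le_antisymm (hm.le_of_adj_Iic_Ici hα hβ hαβ hαS hβS hsα hsβ)
    (hm.le_of_adj_Iic_Ici hβ hα (fun s t h => hαβ t s h.symm) hβS hαS hrβ hrα)

end Membership

def blockGraph (n : ℕ) (ι : Type) : SimpleGraph (BVert n ι) := SimpleGraph.fromRel (rB n ι)

def dHeads (n : ℕ) (t : Fin n) : Fin 3 → IVert n × IVert n :=
  ![(aIV n t, dIV n t), (aIV n t, h1V n), (dIV n t, h2V n)]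

section Block

variable {n : ℕ} {ι : Type}

theorem blockGraph_adj_gadV {g : ι} {x y : IVert n} (h : (gadgetI n).Adj x y) :
    (blockGraph n ι).Adj (gadV g x) (gadV g y) :=
  ⟨by simpa [gadV] using h.ne,
    h.2.imp (fun h => Or.inl ⟨g, x, y, rfl, rfl, h⟩) (fun h => Or.inl ⟨g, y, x, rfl, rfl, h⟩)⟩

theorem gadgetI_adj_padV (t : Fin n) (w : Fin 3) (s : Fin (n + 2)) :
    (gadgetI n).Adj (padV n t w s) (dHeads n t w).1 := by
  fin_cases w <;> simp [gadgetI, rI, padV, aIV, dIV, h1V, dHeads]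

theorem blockGraph_adj_padV_iff {g : ι} {t : Fin n} {w : Fin 3} {s : Fin (n + 2)}
    {y : BVert n ι} : (blockGraph n ι).Adj (gadV g (padV n t w s)) y ↔
      y = gadV g (dHeads n t w).1 ∨ y = gadV g (dHeads n t w).2 := by
  fin_cases w <;>
    aesop (add norm simp [blockGraph, rB, rI, gadV, fV, f'V, cV, bV, padV, aIV, dIV, h1V, h2V,
      dHeads])

theorem exists_cV_of_blockGraph_adj_bV {q : Fin ((n + 1) * (n + 2))} {y : BVert n ι}
    (h : (blockGraph n ι).Adj (bV n ι q) y) :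
    ∃ p : Fin (n + 1), y = cV n ι p ∧ p.val * (n + 2) ≤ q.val ∧ q.val < (p.val + 1) * (n + 2) := by
  aesop (add norm simp [blockGraph, rB, rI, gadV, fV, f'V, cV, bV])

theorem blockGraph_adj_fV {y : BVert n ι} (h : (blockGraph n ι).Adj (fV n ι) y) :
    (∃ g t, y = gadV g (aIV n t)) ∨ y = f'V n ι := by
  aesop (add norm simp [blockGraph, rB, rI, gadV, fV, f'V, cV, bV])

/-- `φ` places a block inside `H`: block edges are edges of `H`, and only the vertices `a_t`
may have neighbours in `H` outside the block. -/
structure IsBlock {W : Type*} (H : SimpleGraph W) (φ : BVert n ι → W) : Prop where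
  injective : Function.Injective φ
  adj : ∀ ⦃x y⦄, (blockGraph n ι).Adj x y → H.Adj (φ x) (φ y)
  exists_eq_of_adj : ∀ ⦃x u⦄, (∀ g t, x ≠ gadV g (aIV n t)) → H.Adj (φ x) u →
    ∃ y, (blockGraph n ι).Adj x y ∧ u = φ y

variable {W : Type*} [Finite W] {H : SimpleGraph W} {S : Set W} {φ : BVert n ι → W}

namespace IsBlock

theorem cV_mem (hb : IsBlock H φ) (hd : IsDom H S) (hm : MembLE H S (n + 1))
    (p : Fin (n + 1)) : φ (cV n ι p) ∈ S := by
  let q : Fin (n + 2) → Fin ((n + 1) * (n + 2)) := fun s => finProdFinEquiv (p, s)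
  have hq (s : Fin (n + 2)) : p.val * (n + 2) ≤ (q s).val ∧ (q s).val < (p.val + 1) * (n + 2) := by
    simp only [q, finProdFinEquiv_apply_val]
    constructor <;> nlinarith [s.isLt]
  refine (hd.mem_or_mem_of_private hm (u := φ (cV n ι p)) (v := φ (cV n ι p))
    (p := fun s => φ (bV n ι (q s))) ?_ (by omega) (fun s => hb.adj ?_) ?_).elim id id
  · intro s s' h
    simpa [q, bV] using hb.injective h
  · simp [blockGraph, rB, cV, bV, hq s]
  · intro s w hw
    obtain ⟨y, hy, rfl⟩ := hb.exists_eq_of_adj (by simp [bV, gadV]) hw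
    obtain ⟨p', rfl, hp'⟩ := exists_cV_of_blockGraph_adj_bV hy
    have : p' = p := Fin.ext <| by
      rw [← Nat.div_eq_of_lt_le hp'.1 hp'.2, ← Nat.div_eq_of_lt_le (hq s).1 (hq s).2]
    simp [this]

theorem notMem_of_nbhd_f'V (hb : IsBlock H φ) (hd : IsDom H S) (hm : MembLE H S (n + 1))
    {z : BVert n ι} (hz : z = f'V n ι ∨ (blockGraph n ι).Adj (f'V n ι) z)
    (hzc : ∀ p, z ≠ cV n ι p) : φ z ∉ S := by
  classical
  intro hzS
  have hc : Function.Injective (φ ∘ cV n ι) :=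
    hb.injective.comp fun p p' h => by simpa [cV] using h
  have hle := hm.card_le (v := φ (f'V n ι)) (T := insert (φ z) (Finset.univ.map ⟨_, hc⟩)) <| by
    simp only [Finset.mem_insert, Finset.mem_map, Finset.mem_univ, true_and,
      Function.Embedding.coeFn_mk, Function.comp_apply, forall_eq_or_imp,
      forall_exists_index, forall_apply_eq_imp_iff]
    refine ⟨⟨hzS, hz.imp (congrArg φ) (@hb.adj _ _)⟩,
      fun p => ⟨hb.cV_mem hd hm p, Or.inr (hb.adj ?_)⟩⟩
    simp [blockGraph, rB, cV, f'V]
  rw [Finset.card_insert_of_notMem (by simpa using fun p h => hzc p (hb.injective h).symm),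
    Finset.card_map, Finset.card_univ, Fintype.card_fin] at hle
  omega

theorem exists_aIV_mem (hb : IsBlock H φ) (hd : IsDom H S) (hm : MembLE H S (n + 1)) :
    ∃ g t, φ (gadV g (aIV n t)) ∈ S := by
  have hf'V : φ (f'V n ι) ∉ S := hb.notMem_of_nbhd_f'V hd hm (Or.inl rfl) (by simp [f'V, cV])
  have hfV : φ (fV n ι) ∉ S :=
    hb.notMem_of_nbhd_f'V hd hm (Or.inr (by simp [blockGraph, rB, fV, f'V])) (by simp [fV, cV])
  obtain ⟨u, huS, hu⟩ := (hd (φ (fV n ι))).resolve_left hfV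
  obtain ⟨y, hy, rfl⟩ := hb.exists_eq_of_adj (by simp [fV, gadV]) hu
  rcases blockGraph_adj_fV hy with ⟨g, t, rfl⟩ | rfl
  exacts [⟨g, t, huS⟩, absurd huS hf'V]

theorem head_mem_or_head_mem (hb : IsBlock H φ) (hd : IsDom H S) (hm : MembLE H S (n + 1))
    (g : ι) (t : Fin n) (w : Fin 3) :
    φ (gadV g (dHeads n t w).1) ∈ S ∨ φ (gadV g (dHeads n t w).2) ∈ S := by
  refine hd.mem_or_mem_of_private hm (p := fun s => φ (gadV g (padV n t w s)))
    (hb.injective.comp fun s s' h => by simpa [gadV, padV] using h) (by omega)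
    (fun s => hb.adj (blockGraph_adj_gadV (gadgetI_adj_padV t w s)).symm) fun s u hu => ?_
  obtain ⟨y, hy, rfl⟩ := hb.exists_eq_of_adj (by simp [gadV, padV, aIV]) hu
  rcases blockGraph_adj_padV_iff.mp hy with rfl | rfl
  exacts [Or.inl rfl, Or.inr rfl]

theorem h1V_notMem_of_selection (hb : IsBlock H φ) (hm : MembLE H S (n + 1)) (g : ι)
    {E : Fin n → IVert n} (hE : ∀ t, E t = aIV n t ∨ E t = dIV n t)
    (hES : ∀ t, φ (gadV g (E t)) ∈ S) {z : IVert n}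
    (hz : (gadgetI n).Adj (h1V n) z) (hzE : ∀ t, z ≠ E t) (hzS : φ (gadV g z) ∈ S) :
    φ (gadV g (h1V n)) ∉ S := by
  classical
  intro h1S
  have hEinj : Function.Injective (φ ∘ gadV g ∘ E) := by
    refine hb.injective.comp fun t t' h => ?_
    rcases hE t with ht | ht <;> rcases hE t' with ht' | ht' <;> simp_all [gadV, aIV, dIV]
  have hEh1 (t : Fin n) : E t ≠ h1V n := by rcases hE t with ht | ht <;> simp [ht, h1V, aIV, dIV]
  have hEadj (t : Fin n) : (gadgetI n).Adj (h1V n) (E t) := by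
    rcases hE t with ht | ht <;> simp [ht, gadgetI, rI, h1V, aIV, dIV]
  have hle := hm.card_le (v := φ (gadV g (h1V n)))
    (T := insert (φ (gadV g (h1V n))) (insert (φ (gadV g z)) (Finset.univ.map ⟨_, hEinj⟩))) <| by
    simp only [Finset.mem_insert, Finset.mem_map, Finset.mem_univ, true_and,
      Function.Embedding.coeFn_mk, Function.comp_apply, forall_eq_or_imp,
      forall_exists_index, forall_apply_eq_imp_iff]
    exact ⟨⟨h1S, Or.inl trivial⟩, ⟨hzS, Or.inr (hb.adj (blockGraph_adj_gadV hz))⟩,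
      fun t => ⟨hES t, Or.inr (hb.adj (blockGraph_adj_gadV (hEadj t)))⟩⟩
  rw [Finset.card_insert_of_notMem, Finset.card_insert_of_notMem, Finset.card_map,
    Finset.card_univ, Fintype.card_fin] at hle
  · omega
  · simpa using fun t h => hzE t (by simpa [gadV] using (hb.injective h).symm)
  · simp only [Finset.mem_insert, Finset.mem_map, Finset.mem_univ, true_and,
      Function.Embedding.coeFn_mk, Function.comp_apply, not_or, not_exists]
    refine ⟨fun h => hz.ne ?_, fun t h => hEh1 t ?_⟩ <;> simpa [gadV] using hb.injective h

theorem h1V_notMem (hb : IsBlock H φ) (hd : IsDom H S) (hm : MembLE H S (n + 1))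
    {g : ι} {t₀ : Fin n} (ha : φ (gadV g (aIV n t₀)) ∈ S) : φ (gadV g (h1V n)) ∉ S := by
  classical
  by_cases h2S : φ (gadV g (h2V n)) ∈ S
  · let E (t : Fin n) : IVert n := if φ (gadV g (aIV n t)) ∈ S then aIV n t else dIV n t
    have hE (t : Fin n) : E t = aIV n t ∨ E t = dIV n t := by
      unfold E; split_ifs <;> simp
    have hES (t : Fin n) : φ (gadV g (E t)) ∈ S := by
      unfold E; split_ifs with h
      · exact h
      · simpa [dHeads, h] using hb.head_mem_or_head_mem hd hm g t 0
    refine hb.h1V_notMem_of_selection hm g hE hES (z := h2V n) (by simp [gadgetI, rI, h1V, h2V])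
      (fun t => ?_) h2S
    rcases hE t with ht | ht <;> simp [ht, h2V, aIV, dIV]
  · refine hb.h1V_notMem_of_selection hm g (E := dIV n) (fun t => Or.inr rfl)
      (fun t => ?_) (z := aIV n t₀) (by simp [gadgetI, rI, h1V, aIV]) (by simp [aIV, dIV]) ha
    simpa [dHeads, h2S] using hb.head_mem_or_head_mem hd hm g t 2

theorem exists_forall_aIV_mem (hb : IsBlock H φ) (hd : IsDom H S) (hm : MembLE H S (n + 1)) :
    ∃ g, ∀ t, φ (gadV g (aIV n t)) ∈ S := by
  obtain ⟨g, t₀, ha⟩ := hb.exists_aIV_mem hd hm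
  refine ⟨g, fun t => ?_⟩
  simpa [dHeads, hb.h1V_notMem hd hm ha] using hb.head_mem_or_head_mem hd hm g t 1

end IsBlock

end Block

section Hmcc

variable {k n : ℕ}

theorem isBlock_vbV (G : SimpleGraph (Fin k × Fin n)) (i : Fin k) :
    IsBlock (Hmcc k n G) (vbV G i) where
  injective _ _ h := by simpa [vbV] using h
  adj x y h := by
    refine ⟨by simpa [vbV] using h.ne, h.2.imp ?_ ?_⟩ <;> intro h
    exacts [Or.inl ⟨i, x, y, rfl, rfl, h⟩, Or.inl ⟨i, y, x, rfl, rfl, h⟩]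
  exists_eq_of_adj x u hx hxu := by
    obtain ⟨hne, h | h⟩ := hxu <;>
      simp only [rH, vbV, ebV, connV, gadV, Sum.inl.injEq, Prod.mk.injEq,
        reduceCtorEq, false_and, and_false, exists_false, false_or, or_false] at h
    · rcases h with ⟨_, _, b, ⟨rfl, rfl⟩, rfl, h⟩ | ⟨_, ℓ, t, ⟨_, rfl⟩, _⟩ | ⟨_, ℓ, t, ⟨_, rfl⟩, _⟩
      · exact ⟨b, ⟨ne_of_apply_ne _ hne, Or.inl h⟩, rfl⟩
      all_goals exact absurd rfl (hx ℓ t)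
    · obtain ⟨_, a, _, rfl, ⟨rfl, rfl⟩, h⟩ := h
      exact ⟨a, ⟨ne_of_apply_ne _ hne, Or.inr h⟩, rfl⟩

theorem isBlock_ebV (G : SimpleGraph (Fin k × Fin n)) (P : Pairs k) :
    IsBlock (Hmcc k n G) (ebV G P) where
  injective _ _ h := by simpa [ebV] using h
  adj x y h := by
    refine ⟨by simpa [ebV] using h.ne, h.2.imp ?_ ?_⟩ <;> intro h
    exacts [Or.inr (Or.inl ⟨P, x, y, rfl, rfl, h⟩), Or.inr (Or.inl ⟨P, y, x, rfl, rfl, h⟩)]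
  exists_eq_of_adj x u hx hxu := by
    obtain ⟨hne, h | h⟩ := hxu <;>
      simp only [rH, vbV, ebV, connV, gadV, Sum.inl.injEq, Sum.inr.injEq,
        Sigma.mk.inj_iff, reduceCtorEq, false_and, and_false, exists_false, false_or,
        or_false] at h
    · rcases h with ⟨_, _, b, ⟨rfl, ha⟩, rfl, h⟩ | ⟨_, e, t, ⟨rfl, hxe⟩, _⟩
      · obtain rfl := eq_of_heq ha
        exact ⟨b, ⟨ne_of_apply_ne _ hne, Or.inl h⟩, rfl⟩
      · exact absurd (eq_of_heq hxe) (hx e t)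
    · obtain ⟨_, a, _, rfl, ⟨rfl, hx⟩, h⟩ := h
      obtain rfl := eq_of_heq hx
      exact ⟨a, ⟨ne_of_apply_ne _ hne, Or.inr h⟩, rfl⟩

variable {G : SimpleGraph (Fin k × Fin n)} {S : Set (VHmcc k n G)}

theorem adj_connV_vbV {i : Fin k} {P : Pairs k} {ℓ t : Fin n} {side kind : Bool}
    (h : rH k n G (vbV G i (gadV ℓ (aIV n t))) (connV G P side kind)) :
    (Hmcc k n G).Adj (connV G P side kind) (vbV G i (gadV ℓ (aIV n t))) :=
  ⟨by simp [vbV, connV], Or.inr h⟩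

theorem adj_connV_ebV {P : Pairs k} {e : EdgeIn G P} {t : Fin n} {side kind : Bool}
    (h : rH k n G (ebV G P (gadV e (aIV n t))) (connV G P side kind)) :
    (Hmcc k n G).Adj (connV G P side kind) (ebV G P (gadV e (aIV n t))) :=
  ⟨by simp [ebV, connV], Or.inr h⟩

theorem eq_fst_of_forall_aIV_mem (hm : MembLE (Hmcc k n G) S (n + 1)) {P : Pairs k} {ℓ : Fin n}
    {e : EdgeIn G P} (hℓ : ∀ t, vbV G P.1.1 (gadV ℓ (aIV n t)) ∈ S)
    (he : ∀ t, ebV G P (gadV e (aIV n t)) ∈ S) : ℓ = e.1.1 :=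
  hm.eq_of_connectors (s := connV G P false true) (r := connV G P false false)
    (α := fun t => vbV G P.1.1 (gadV ℓ (aIV n t))) (β := fun t => ebV G P (gadV e (aIV n t)))
    (fun _ _ h => by simpa [vbV, gadV, aIV] using h)
    (fun _ _ h => by simpa [ebV, gadV, aIV] using h)
    (fun _ _ => by simp [vbV, ebV]) hℓ he
    (fun t ht => adj_connV_vbV (Or.inr (Or.inr (Or.inl ⟨P, ℓ, t, rfl, Or.inl ⟨ht, rfl⟩⟩))))
    (fun t ht => adj_connV_ebV (Or.inr (Or.inr (Or.inr (Or.inr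
      ⟨P, e, t, rfl, Or.inl (Or.inr ⟨ht, rfl⟩)⟩)))))
    (fun t ht => adj_connV_ebV (Or.inr (Or.inr (Or.inr (Or.inr
      ⟨P, e, t, rfl, Or.inl (Or.inl ⟨ht, rfl⟩)⟩)))))
    (fun t ht => adj_connV_vbV (Or.inr (Or.inr (Or.inl ⟨P, ℓ, t, rfl, Or.inr ⟨ht, rfl⟩⟩))))

theorem eq_snd_of_forall_aIV_mem (hm : MembLE (Hmcc k n G) S (n + 1)) {P : Pairs k} {ℓ : Fin n}
    {e : EdgeIn G P} (hℓ : ∀ t, vbV G P.1.2 (gadV ℓ (aIV n t)) ∈ S)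
    (he : ∀ t, ebV G P (gadV e (aIV n t)) ∈ S) : ℓ = e.1.2 :=
  hm.eq_of_connectors (s := connV G P true true) (r := connV G P true false)
    (α := fun t => vbV G P.1.2 (gadV ℓ (aIV n t))) (β := fun t => ebV G P (gadV e (aIV n t)))
    (fun _ _ h => by simpa [vbV, gadV, aIV] using h)
    (fun _ _ h => by simpa [ebV, gadV, aIV] using h)
    (fun _ _ => by simp [vbV, ebV]) hℓ he
    (fun t ht => adj_connV_vbV (Or.inr (Or.inr (Or.inr (Or.inl ⟨P, ℓ, t, rfl, Or.inl ⟨ht, rfl⟩⟩)))))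
    (fun t ht => adj_connV_ebV (Or.inr (Or.inr (Or.inr (Or.inr
      ⟨P, e, t, rfl, Or.inr (Or.inr ⟨ht, rfl⟩)⟩)))))
    (fun t ht => adj_connV_ebV (Or.inr (Or.inr (Or.inr (Or.inr
      ⟨P, e, t, rfl, Or.inr (Or.inl ⟨ht, rfl⟩)⟩)))))
    (fun t ht => adj_connV_vbV (Or.inr (Or.inr (Or.inr (Or.inl ⟨P, ℓ, t, rfl, Or.inr ⟨ht, rfl⟩⟩)))))

end Hmcc

end MCCRed

open MCCRed in
theorem stmt_13_general (k n : ℕ)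
    (G : SimpleGraph (Fin k × Fin n))
    (hmds : ∃ S : Set (VHmcc k n G),
      IsDom (Hmcc k n G) S ∧ MembLE (Hmcc k n G) S (n + 1)) :
    ∃ x : Fin k → Fin n, ∀ i j : Fin k, i ≠ j → G.Adj (i, x i) (j, x j) := by
  obtain ⟨S, hd, hm⟩ := hmds
  choose x hx using fun i => (isBlock_vbV G i).exists_forall_aIV_mem hd hm
  choose e he using fun P => (isBlock_ebV G P).exists_forall_aIV_mem hd hm
  have hadj {i j : Fin k} (h : i < j) : G.Adj (i, x i) (j, x j) := by
    let P : Pairs k := ⟨(i, j), h⟩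
    rw [eq_fst_of_forall_aIV_mem hm (hx i) (he P), eq_snd_of_forall_aIV_mem hm (hx j) (he P)]
    exact (e P).2
  refine ⟨x, fun i j hij => ?_⟩
  rcases hij.lt_or_gt with h | h
  exacts [hadj h, (hadj h).symm]

open MCCRed in
/-- If `H` has a dominating set `S` with `M(v,S) ≤ n+1` for every vertex `v`
of `H`, then `G` has a multicolored clique. -/
theorem stmt_13 (k n : ℕ) (hk : 2 ≤ k) (hn : 1 ≤ n)
    (G : SimpleGraph (Fin k × Fin n))
    (hmds : ∃ S : Set (VHmcc k n G),
      IsDom (Hmcc k n G) S ∧ MembLE (Hmcc k n G) S (n + 1)) :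
    ∃ x : Fin k → Fin n, ∀ i j : Fin k, i ≠ j → G.Adj (i, x i) (j, x j) :=
  stmt_13_general k n G hmds
end
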